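/- Let G be a simple graph on the unordered pairs V = K^(2) satisfying conditions C1 and C2, and let X = G⊕C be the graph obtained by adjoining the claw C and the connecting edges. Then any two distinct non-adjacent vertices of X have exactly 2 common neighbours. -/
import Mathlib

open scoped Classical

/-- The set of unordered pairs of distinct elements of `K`. -/
abbrev NPairs (K : Type) : Type := {s : Sym2 K // ¬ s.IsDiag}

/-- `P_ab`: the neighbours of `ab` in `G`. -/
def Pset {K : Type} (G : SimpleGraph (NPairs K)) (ab : NPairs K) : Set (NPairs K) :=
  {cd | G.Adj ab cd}

/-- `Q_ab`: the pairs different from `ab` sharing exactly one element of `K` with `ab`. -/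
def Qset {K : Type} (ab : NPairs K) : Set (NPairs K) :=
  {cd | cd ≠ ab ∧ ∃! a : K, a ∈ ab.val ∧ a ∈ cd.val}

/-- `R_ab`: the remaining pairs. -/
def Rset {K : Type} (G : SimpleGraph (NPairs K)) (ab : NPairs K) : Set (NPairs K) :=
  ({ab} ∪ Pset G ab ∪ Qset ab)ᶜ

/-- Condition C1: adjacent pairs share no element of `K`. -/
def CondC1 {K : Type} (G : SimpleGraph (NPairs K)) : Prop :=
  ∀ ab cd : NPairs K, G.Adj ab cd → ∀ a : K, a ∈ ab.val → a ∉ cd.val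

/-- Condition C2: for every vertex `ab` the partition `{ab} ∪ P_ab ∪ Q_ab ∪ R_ab`
is equitable with the intersection matrix `M` of the paper. -/
def CondC2 {K : Type} (k : ℕ) (G : SimpleGraph (NPairs K)) : Prop :=
  ∀ ab : NPairs K,
    (Pset G ab).ncard = k - 2 ∧
    (∀ cd ∈ Pset G ab,
      (Pset G ab ∩ G.neighborSet cd).ncard = 0 ∧
      (Qset ab ∩ G.neighborSet cd).ncard = 2 ∧
      (Rset G ab ∩ G.neighborSet cd).ncard = k - 5) ∧
    (∀ cd ∈ Qset ab, ¬ G.Adj ab cd ∧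
      (Pset G ab ∩ G.neighborSet cd).ncard = 1 ∧
      (Qset ab ∩ G.neighborSet cd).ncard = 2 ∧
      (Rset G ab ∩ G.neighborSet cd).ncard = k - 5) ∧
    (∀ cd ∈ Rset G ab, ¬ G.Adj ab cd ∧
      (Pset G ab ∩ G.neighborSet cd).ncard = 2 ∧
      (Qset ab ∩ G.neighborSet cd).ncard = 4 ∧
      (Rset G ab ∩ G.neighborSet cd).ncard = k - 8)

/-- Edge relation for the graph `G ⊕ C`: the edges of `G`; the claw edges joining the
`Unit` vertex `*` to each `a ∈ K`; and edges joining `ab ∈ V` to the elements it contains. -/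
def crossRel {K : Type} (G : SimpleGraph (NPairs K)) :
    (NPairs K ⊕ (Unit ⊕ K)) → (NPairs K ⊕ (Unit ⊕ K)) → Prop
  | Sum.inl ab, Sum.inl cd => G.Adj ab cd
  | Sum.inr (Sum.inl _), Sum.inr (Sum.inr _) => True
  | Sum.inl ab, Sum.inr (Sum.inr a) => a ∈ ab.val
  | _, _ => False

/-- The graph `X = G ⊕ C` on `W = V ⊕ (Unit ⊕ K)`. -/
def XGraph {K : Type} (G : SimpleGraph (NPairs K)) :
    SimpleGraph (NPairs K ⊕ (Unit ⊕ K)) :=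
  SimpleGraph.fromRel (crossRel G)

section Aux

variable {K : Type} {G : SimpleGraph (NPairs K)}

lemma xadj_ll {ab cd : NPairs K} : (XGraph G).Adj (Sum.inl ab) (Sum.inl cd) ↔ G.Adj ab cd := by
  rw [XGraph, SimpleGraph.fromRel_adj]
  constructor
  · rintro ⟨h1, h2 | h2⟩
    · exact h2
    · exact h2.symm
  · intro h
    exact ⟨by simpa using h.ne, Or.inl h⟩

lemma xadj_lk {ab : NPairs K} {a : K} :
    (XGraph G).Adj (Sum.inl ab) (Sum.inr (Sum.inr a)) ↔ a ∈ ab.val := by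
  rw [XGraph, SimpleGraph.fromRel_adj]
  simp [crossRel]

lemma xadj_sk {u : Unit} {a : K} : (XGraph G).Adj (Sum.inr (Sum.inl u)) (Sum.inr (Sum.inr a)) := by
  rw [XGraph, SimpleGraph.fromRel_adj]
  simp [crossRel]

lemma xadj_ls {ab : NPairs K} {u : Unit} :
    ¬ (XGraph G).Adj (Sum.inl ab) (Sum.inr (Sum.inl u)) := by
  rw [XGraph, SimpleGraph.fromRel_adj]
  simp [crossRel]

lemma xadj_kk {a b : K} : ¬ (XGraph G).Adj (Sum.inr (Sum.inr a)) (Sum.inr (Sum.inr b)) := by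
  rw [XGraph, SimpleGraph.fromRel_adj]
  simp [crossRel]

lemma xadj_ss {u u' : Unit} : ¬ (XGraph G).Adj (Sum.inr (Sum.inl u)) (Sum.inr (Sum.inl u')) := by
  rw [XGraph, SimpleGraph.fromRel_adj]
  simp [crossRel]

lemma sym2_rep {α : Type*} (z : Sym2 α) : ∃ x y, z = s(x, y) :=
  Sym2.ind (fun x y => ⟨x, y, rfl⟩) z

variable [Fintype K]

lemma card_coe (s : Set (NPairs K ⊕ (Unit ⊕ K))) {inst : Fintype s} :
    @Fintype.card s inst = s.ncard := by
  rw [← Nat.card_eq_fintype_card, Nat.card_coe_set_eq]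

/-- Case: star and a pair `ab`. -/
lemma caseA (ab : NPairs K) (u : Unit) :
    Fintype.card ((XGraph G).commonNeighbors (Sum.inr (Sum.inl u)) (Sum.inl ab)) = 2 := by
  obtain ⟨x, y, hxy⟩ := sym2_rep ab.val
  have hne : x ≠ y := by
    have := ab.prop; rw [hxy] at this; simpa using this
  have hset : (XGraph G).commonNeighbors (Sum.inr (Sum.inl u)) (Sum.inl ab) =
      {Sum.inr (Sum.inr x), Sum.inr (Sum.inr y)} := by
    ext z
    rcases z with cd | u' | c
    · simp only [SimpleGraph.mem_commonNeighbors]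
      constructor
      · rintro ⟨h, -⟩; exact absurd h.symm xadj_ls
      · intro h; simp at h
    · simp only [SimpleGraph.mem_commonNeighbors]
      constructor
      · rintro ⟨h, -⟩; exact absurd h xadj_ss
      · intro h; simp at h
    · simp only [SimpleGraph.mem_commonNeighbors]
      constructor
      · rintro ⟨-, h⟩
        have := xadj_lk.mp h
        rw [hxy, Sym2.mem_iff] at this
        rcases this with rfl | rfl <;> simp
      · intro h
        simp only [Set.mem_insert_iff, Set.mem_singleton_iff, Sum.inr.injEq] at h
        refine ⟨xadj_sk, xadj_lk.mpr ?_⟩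
        rw [hxy, Sym2.mem_iff]
        rcases h with h | h <;> simp [h]
  rw [card_coe _, hset, Set.ncard_pair (by simp [hne])]

/-- Case: two distinct elements of `K`. -/
lemma caseB (a b : K) (hne : a ≠ b) :
    Fintype.card ((XGraph G).commonNeighbors (Sum.inr (Sum.inr a)) (Sum.inr (Sum.inr b))) = 2 := by
  have hd : ¬ (s(a, b) : Sym2 K).IsDiag := by simp [hne]
  have hset : (XGraph G).commonNeighbors (Sum.inr (Sum.inr a)) (Sum.inr (Sum.inr b)) =
      {Sum.inr (Sum.inl ()), Sum.inl ⟨s(a, b), hd⟩} := by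
    ext z
    rcases z with cd | u' | c
    · simp only [SimpleGraph.mem_commonNeighbors]
      constructor
      · rintro ⟨h1, h2⟩
        have ha : a ∈ cd.val := xadj_lk.mp h1.symm
        have hb : b ∈ cd.val := xadj_lk.mp h2.symm
        have : cd.val = s(a, b) := (Sym2.mem_and_mem_iff hne).mp ⟨ha, hb⟩
        simp only [Set.mem_insert_iff, Set.mem_singleton_iff]
        right
        exact congrArg Sum.inl (Subtype.ext this)
      · intro h
        simp only [Set.mem_insert_iff, Set.mem_singleton_iff] at h
        rcases h with h | h
        · simp at h
        · have : cd = ⟨s(a, b), hd⟩ := by simpa using h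
          subst this
          exact ⟨(xadj_lk.mpr (by simp)).symm, (xadj_lk.mpr (by simp)).symm⟩
    · simp only [SimpleGraph.mem_commonNeighbors]
      constructor
      · intro _; simp
      · intro _; exact ⟨xadj_sk.symm, xadj_sk.symm⟩
    · simp only [SimpleGraph.mem_commonNeighbors]
      constructor
      · rintro ⟨h, -⟩; exact absurd h xadj_kk
      · intro h; simp at h
  rw [card_coe _, hset, Set.ncard_pair (by simp)]

/-- Key counting: the number of `G`-neighbours of `ab` containing a fixed `a ∉ ab`. -/
lemma key4 (k : ℕ) (hC1 : CondC1 G) (hC2 : CondC2 k G) (ab : NPairs K) (a : K)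
    (ha : a ∉ ab.val) : {cd : NPairs K | G.Adj ab cd ∧ a ∈ cd.val}.ncard = 2 := by
  obtain ⟨x, y, hxy⟩ := sym2_rep ab.val
  have hxab : x ∈ ab.val := by rw [hxy]; simp
  have hax : a ≠ x := fun h => ha (h ▸ hxab)
  have hd : ¬ (s(a, x) : Sym2 K).IsDiag := by simp [hax]
  set ef : NPairs K := ⟨s(a, x), hd⟩ with hef
  have haef : a ∈ ef.val := by simp [hef]
  have hxef : x ∈ ef.val := by simp [hef]
  have habQ : ab ∈ Qset ef := by
    refine ⟨fun h => ha (h ▸ haef), x, ⟨hxef, hxab⟩, ?_⟩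
    rintro e ⟨he1, he2⟩
    rcases Sym2.mem_iff.mp he1 with rfl | rfl
    · exact absurd he2 ha
    · rfl
  obtain ⟨-, -, hQ2, -⟩ := ((hC2 ef).2.2.1) ab habQ
  have hseteq : {cd : NPairs K | G.Adj ab cd ∧ a ∈ cd.val} = Qset ef ∩ G.neighborSet ab := by
    ext cd
    simp only [Set.mem_setOf_eq, Set.mem_inter_iff, SimpleGraph.mem_neighborSet]
    constructor
    · rintro ⟨hadj, hacd⟩
      have hxcd : x ∉ cd.val := hC1 ab cd hadj x hxab
      refine ⟨⟨fun h => hxcd (h ▸ hxef), a, ⟨haef, hacd⟩, ?_⟩, hadj⟩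
      rintro e ⟨he1, he2⟩
      rcases Sym2.mem_iff.mp he1 with rfl | rfl
      · rfl
      · exact absurd he2 hxcd
    · rintro ⟨⟨hne, e, ⟨he1, he2⟩, -⟩, hadj⟩
      have hxcd : x ∉ cd.val := hC1 ab cd hadj x hxab
      refine ⟨hadj, ?_⟩
      rcases Sym2.mem_iff.mp he1 with rfl | rfl
      · exact he2
      · exact absurd he2 hxcd
  rw [hseteq]
  exact hQ2

lemma ncard_coe_npairs : True := trivial

/-- Case: element `a` and pair `ab` with `a ∉ ab`. -/
lemma caseC (k : ℕ) (hC1 : CondC1 G) (hC2 : CondC2 k G) (ab : NPairs K) (a : K)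
    (ha : a ∉ ab.val) :
    Fintype.card ((XGraph G).commonNeighbors (Sum.inr (Sum.inr a)) (Sum.inl ab)) = 2 := by
  have hset : (XGraph G).commonNeighbors (Sum.inr (Sum.inr a)) (Sum.inl ab) =
      Sum.inl '' {cd : NPairs K | G.Adj ab cd ∧ a ∈ cd.val} := by
    ext z
    rcases z with cd | u' | c
    · simp only [SimpleGraph.mem_commonNeighbors]
      constructor
      · rintro ⟨h1, h2⟩
        exact ⟨cd, ⟨xadj_ll.mp h2, xadj_lk.mp h1.symm⟩, rfl⟩
      · rintro ⟨cd', ⟨h1, h2⟩, hcd⟩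
        cases hcd
        exact ⟨(xadj_lk.mpr h2).symm, xadj_ll.mpr h1⟩
    · simp only [SimpleGraph.mem_commonNeighbors]
      constructor
      · rintro ⟨-, h⟩; exact absurd h xadj_ls
      · rintro ⟨cd', -, hcd⟩; cases hcd
    · simp only [SimpleGraph.mem_commonNeighbors]
      constructor
      · rintro ⟨h, -⟩; exact absurd h xadj_kk
      · rintro ⟨cd', -, hcd⟩; cases hcd
  rw [card_coe _, hset, Set.ncard_image_of_injective _ Sum.inl_injective]
  exact key4 k hC1 hC2 ab a ha

/-- Case: two distinct non-adjacent pairs. -/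
lemma caseD (k : ℕ) (hC2 : CondC2 k G) (ab cd : NPairs K) (hne : ab ≠ cd)
    (hnadj : ¬ G.Adj ab cd) :
    Fintype.card ((XGraph G).commonNeighbors (Sum.inl ab) (Sum.inl cd)) = 2 := by
  have hset : (XGraph G).commonNeighbors (Sum.inl ab) (Sum.inl cd) =
      Sum.inl '' (Pset G ab ∩ G.neighborSet cd) ∪
      (Sum.inr ∘ Sum.inr) '' {e : K | e ∈ ab.val ∧ e ∈ cd.val} := by
    ext z
    rcases z with ef | u' | e
    · simp only [SimpleGraph.mem_commonNeighbors, Set.mem_union, Set.mem_image]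
      constructor
      · rintro ⟨h1, h2⟩
        exact Or.inl ⟨ef, ⟨xadj_ll.mp h1, xadj_ll.mp h2⟩, rfl⟩
      · rintro (⟨ef', ⟨h1, h2⟩, hef⟩ | ⟨e, -, hef⟩)
        · cases hef
          exact ⟨xadj_ll.mpr h1, xadj_ll.mpr h2⟩
        · cases hef
    · simp only [SimpleGraph.mem_commonNeighbors, Set.mem_union, Set.mem_image]
      constructor
      · rintro ⟨h, -⟩; exact absurd h xadj_ls
      · rintro (⟨ef', -, hef⟩ | ⟨e, -, hef⟩) <;> cases hef
    · simp only [SimpleGraph.mem_commonNeighbors, Set.mem_union, Set.mem_image]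
      constructor
      · rintro ⟨h1, h2⟩
        exact Or.inr ⟨e, ⟨xadj_lk.mp h1, xadj_lk.mp h2⟩, rfl⟩
      · rintro (⟨ef', -, hef⟩ | ⟨e', ⟨h1, h2⟩, hef⟩)
        · cases hef
        · cases hef
          exact ⟨xadj_lk.mpr h1, xadj_lk.mpr h2⟩
  have hdisj : Disjoint (Sum.inl '' (Pset G ab ∩ G.neighborSet cd) :
      Set (NPairs K ⊕ (Unit ⊕ K)))
      ((Sum.inr ∘ Sum.inr) '' {e : K | e ∈ ab.val ∧ e ∈ cd.val}) := by
    rw [Set.disjoint_left]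
    rintro z ⟨ef, -, rfl⟩ ⟨e, -, he⟩
    cases he
  rw [card_coe _, hset, Set.ncard_union_eq hdisj (Set.toFinite _) (Set.toFinite _),
    Set.ncard_image_of_injective _ Sum.inl_injective,
    Set.ncard_image_of_injective _ (Sum.inr_injective.comp Sum.inr_injective)]
  by_cases hQ : cd ∈ Qset ab
  · obtain ⟨-, hP1, -, -⟩ := ((hC2 ab).2.2.1) cd hQ
    obtain ⟨-, e₀, he₀, huniq⟩ := hQ
    have : {e : K | e ∈ ab.val ∧ e ∈ cd.val} = {e₀} := by
      ext e
      simp only [Set.mem_setOf_eq, Set.mem_singleton_iff]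
      exact ⟨fun h => huniq e h, fun h => h ▸ he₀⟩
    rw [hP1, this, Set.ncard_singleton]
  · have hR : cd ∈ Rset G ab := by
      simp only [Rset, Set.mem_compl_iff, Set.mem_union, Set.mem_singleton_iff]
      push_neg
      exact ⟨⟨fun h => hne h.symm, hnadj⟩, hQ⟩
    obtain ⟨-, hP2, -, -⟩ := ((hC2 ab).2.2.2) cd hR
    have hempty : {e : K | e ∈ ab.val ∧ e ∈ cd.val} = ∅ := by
      ext e
      simp only [Set.mem_setOf_eq, Set.mem_empty_iff_false, iff_false]
      rintro ⟨h1, h2⟩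
      apply hQ
      refine ⟨fun h => hne h.symm, e, ⟨h1, h2⟩, ?_⟩
      rintro e' ⟨h1', h2'⟩
      by_contra hee
      have : ab.val = s(e', e) := (Sym2.mem_and_mem_iff hee).mp ⟨h1', h1⟩
      have h2 : cd.val = s(e', e) := (Sym2.mem_and_mem_iff hee).mp ⟨h2', h2⟩
      exact hne (Subtype.ext (this.trans h2.symm))
    rw [hP2, hempty, Set.ncard_empty]

end Aux

theorem stmt_2 (k : ℕ) (hk : 10 ≤ k) (K : Type) [Fintype K] (hK : Fintype.card K = k)
    (G : SimpleGraph (NPairs K)) (hC1 : CondC1 G) (hC2 : CondC2 k G) :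
    ∀ v w : NPairs K ⊕ (Unit ⊕ K), v ≠ w → ¬ (XGraph G).Adj v w →
      Fintype.card ((XGraph G).commonNeighbors v w) = 2 := by
  intro v w hvw hnadj
  rcases v with ab | u | a <;> rcases w with cd | u' | b
  · exact caseD k hC2 ab cd (by simpa using hvw) (fun h => hnadj (xadj_ll.mpr h))
  · have h := caseA (G := G) ab u'
    rw [card_coe _] at h ⊢
    rwa [SimpleGraph.commonNeighbors_symm]
  · have h := caseC k hC1 hC2 ab b (fun h => hnadj (xadj_lk.mpr h))
    rw [card_coe _] at h ⊢
    rwa [SimpleGraph.commonNeighbors_symm]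
  · exact caseA cd u
  · exact absurd (congrArg (Sum.inr ∘ Sum.inl) (Subsingleton.elim u u')) hvw
  · exact absurd xadj_sk hnadj
  · exact caseC k hC1 hC2 cd a (fun h => hnadj (xadj_lk.mpr h).symm)
  · exact absurd xadj_sk.symm hnadj
  · exact caseB a b (by simpa using hvw)
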